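/- Lemma 2.2, first part (the dual edge formula, equation (2.1)). Let p_i, p_j, p_k, p_l be unit vectors in ℝ³ with det(p_i,p_j,p_k) > 0 and det(p_i,p_j,p_l) < 0, and let c_ij be the spherical edge weight of this configuration. Let n_k ∈ ℝ³ be the unique vector with ⟨n_k,p_i⟩ = ⟨n_k,p_j⟩ = ⟨n_k,p_k⟩ = 1, and let n_l ∈ ℝ³ be the unique vector with ⟨n_l,p_i⟩ = ⟨n_l,p_j⟩ = ⟨n_l,p_l⟩ = 1 (the dual vertices, i.e. the intersection points of the tangent planes to the unit sphere at the respective triples). Then n_k − n_l = c_ij·(p_i × p_j). -/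
import Mathlib


noncomputable section

/-- Standard inner product on `ℝ³`. -/
def dot3 (x y : Fin 3 → ℝ) : ℝ := x 0 * y 0 + x 1 * y 1 + x 2 * y 2

/-- Euclidean norm on `ℝ³`. -/
def norm3 (x : Fin 3 → ℝ) : ℝ := Real.sqrt (dot3 x x)

/-- Cross product on `ℝ³`. -/
def cross3 (x y : Fin 3 → ℝ) : Fin 3 → ℝ :=
  ![x 1 * y 2 - x 2 * y 1, x 2 * y 0 - x 0 * y 2, x 0 * y 1 - x 1 * y 0]

/-- Determinant of three vectors in `ℝ³`. -/
def det3 (x y z : Fin 3 → ℝ) : ℝ := dot3 (cross3 x y) z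

/-- Spherical angle at `a` between `b` and `c` (all unit vectors). -/
def sphAngle (a b c : Fin 3 → ℝ) : ℝ :=
  Real.arccos (dot3 (b - dot3 a b • a) (c - dot3 a c • a) /
    (norm3 (b - dot3 a b • a) * norm3 (c - dot3 a c • a)))

/-- Spherical edge weight of two adjacent spherical triangles `p_i p_j p_k` (positively
oriented) and `p_i p_j p_l` (negatively oriented) sharing the edge `ij`. -/
def sphEdgeWeight (pi pj pk pl : Fin 3 → ℝ) : ℝ :=
  (Real.tan ((sphAngle pi pj pk + sphAngle pj pk pi - sphAngle pk pi pj) / 2)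
   + Real.tan ((sphAngle pi pl pj + sphAngle pj pi pl - sphAngle pl pj pi) / 2))
  / (2 * Real.cos (Real.arccos (dot3 pi pj) / 2) ^ 2)

lemma tan_half_aux (θ : ℝ) (h : Real.cos θ ≠ -1) :
    Real.tan (θ / 2) = Real.sin θ / (1 + Real.cos θ) := by
  have hcs : Real.cos (θ/2) ^ 2 = 1/2 + Real.cos θ / 2 := by
    have := Real.cos_sq (θ/2); rw [show 2 * (θ/2) = θ by ring] at this; exact this
  have hc0 : Real.cos (θ/2) ≠ 0 := by
    intro h0; apply h; rw [h0] at hcs; nlinarith [hcs]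
  have hs : Real.sin θ = 2 * Real.sin (θ/2) * Real.cos (θ/2) := by
    rw [← Real.sin_two_mul, show 2 * (θ/2) = θ by ring]
  have hc2 : 1 + Real.cos θ = 2 * Real.cos (θ/2)^2 := by linarith [hcs]
  rw [Real.tan_eq_sin_div_cos, hs, hc2]
  field_simp

set_option maxHeartbeats 1000000 in
lemma tan_lemma (x y z D : ℝ) (hx : x^2 < 1) (hy : y^2 < 1) (hz : z^2 < 1)
    (hD0 : 0 < D) (hD2 : D^2 = 1 - x^2 - y^2 - z^2 + 2*x*y*z) :
    Real.tan ((Real.arccos ((z - x*y) / (Real.sqrt (1 - x^2) * Real.sqrt (1 - y^2)))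
      + Real.arccos ((y - x*z) / (Real.sqrt (1 - x^2) * Real.sqrt (1 - z^2)))
      - Real.arccos ((x - y*z) / (Real.sqrt (1 - y^2) * Real.sqrt (1 - z^2)))) / 2)
    = (1 + x - y - z) / D := by
  have h1x : (0:ℝ) < 1 - x := by nlinarith [sq_nonneg (x - 1)]
  have h1x' : (0:ℝ) < 1 + x := by nlinarith [sq_nonneg (x + 1)]
  have h1y : (0:ℝ) < 1 + y := by nlinarith [sq_nonneg (y + 1)]
  have h1y' : (0:ℝ) < 1 - y := by nlinarith [sq_nonneg (y - 1)]
  have h1z : (0:ℝ) < 1 + z := by nlinarith [sq_nonneg (z + 1)]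
  have h1z' : (0:ℝ) < 1 - z := by nlinarith [sq_nonneg (z - 1)]
  set u := Real.sqrt (1 - x^2) with hu_def
  set v := Real.sqrt (1 - y^2) with hv_def
  set w := Real.sqrt (1 - z^2) with hw_def
  have hu : u^2 = 1 - x^2 := Real.sq_sqrt (by linarith)
  have hv : v^2 = 1 - y^2 := Real.sq_sqrt (by linarith)
  have hw : w^2 = 1 - z^2 := Real.sq_sqrt (by linarith)
  have hu0 : 0 < u := Real.sqrt_pos.mpr (by linarith)
  have hv0 : 0 < v := Real.sqrt_pos.mpr (by linarith)
  have hw0 : 0 < w := Real.sqrt_pos.mpr (by linarith)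
  set A := Real.arccos ((z - x*y) / (u * v)) with hA_def
  set B := Real.arccos ((y - x*z) / (u * w)) with hB_def
  set C := Real.arccos ((x - y*z) / (v * w)) with hC_def
  have hbA' : (u*v)^2 - (z - x*y)^2 = D^2 := by rw [mul_pow, hu, hv]; linear_combination -hD2
  have hbB' : (u*w)^2 - (y - x*z)^2 = D^2 := by rw [mul_pow, hu, hw]; linear_combination -hD2
  have hbC' : (v*w)^2 - (x - y*z)^2 = D^2 := by rw [mul_pow, hv, hw]; linear_combination -hD2
  have hbA : (z - x*y)^2 ≤ (u*v)^2 := by linarith [sq_nonneg D]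
  have hbB : (y - x*z)^2 ≤ (u*w)^2 := by linarith [sq_nonneg D]
  have hbC : (x - y*z)^2 ≤ (v*w)^2 := by linarith [sq_nonneg D]
  have huv0 : 0 < u*v := mul_pos hu0 hv0
  have huw0 : 0 < u*w := mul_pos hu0 hw0
  have hvw0 : 0 < v*w := mul_pos hv0 hw0
  have habsA := abs_le.mp (by
    rw [← Real.sqrt_sq huv0.le, ← Real.sqrt_sq_eq_abs]
    exact Real.sqrt_le_sqrt hbA : |z - x*y| ≤ u*v)
  have habsB := abs_le.mp (by
    rw [← Real.sqrt_sq huw0.le, ← Real.sqrt_sq_eq_abs]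
    exact Real.sqrt_le_sqrt hbB : |y - x*z| ≤ u*w)
  have habsC := abs_le.mp (by
    rw [← Real.sqrt_sq hvw0.le, ← Real.sqrt_sq_eq_abs]
    exact Real.sqrt_le_sqrt hbC : |x - y*z| ≤ v*w)
  have hcA : Real.cos A * (u*v) = z - x*y := by
    rw [hA_def, Real.cos_arccos (by rw [le_div_iff₀ huv0]; linarith [habsA.1])
      (by rw [div_le_iff₀ huv0]; linarith [habsA.2])]
    field_simp
  have hcB : Real.cos B * (u*w) = y - x*z := by
    rw [hB_def, Real.cos_arccos (by rw [le_div_iff₀ huw0]; linarith [habsB.1])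
      (by rw [div_le_iff₀ huw0]; linarith [habsB.2])]
    field_simp
  have hcC : Real.cos C * (v*w) = x - y*z := by
    rw [hC_def, Real.cos_arccos (by rw [le_div_iff₀ hvw0]; linarith [habsC.1])
      (by rw [div_le_iff₀ hvw0]; linarith [habsC.2])]
    field_simp
  have sq1 : 1 - ((z - x*y)/(u*v))^2 = (D/(u*v))^2 := by
    rw [div_pow, div_pow]
    rw [eq_div_iff (by positivity), sub_mul, div_mul_cancel₀ _ (by positivity : (u*v)^2 ≠ 0)]
    linarith [hbA']
  have hsA : Real.sin A * (u*v) = D := by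
    rw [hA_def, Real.sin_arccos, sq1, Real.sqrt_sq (by positivity)]
    field_simp
  have sq2 : 1 - ((y - x*z)/(u*w))^2 = (D/(u*w))^2 := by
    rw [div_pow, div_pow]
    rw [eq_div_iff (by positivity), sub_mul, div_mul_cancel₀ _ (by positivity : (u*w)^2 ≠ 0)]
    linarith [hbB']
  have hsB : Real.sin B * (u*w) = D := by
    rw [hB_def, Real.sin_arccos, sq2, Real.sqrt_sq (by positivity)]
    field_simp
  have sq3 : 1 - ((x - y*z)/(v*w))^2 = (D/(v*w))^2 := by
    rw [div_pow, div_pow]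
    rw [eq_div_iff (by positivity), sub_mul, div_mul_cancel₀ _ (by positivity : (v*w)^2 ≠ 0)]
    linarith [hbC']
  have hsC : Real.sin C * (v*w) = D := by
    rw [hC_def, Real.sin_arccos, sq3, Real.sqrt_sq (by positivity)]
    field_simp
  have hsin : Real.sin (A + B - C) * (u*v*(u*w)*(v*w))
      = D * ((1-x)*(1+y)*(1+z)*(1+x-y-z)) := by
    rw [Real.sin_sub, Real.sin_add, Real.cos_add]
    linear_combination ((Real.cos B) * (Real.cos C) * u * v * w^2 + (Real.sin B) * (Real.sin C) * u * v * w^2) * hsA + ((-1) * (Real.cos B) * (Real.sin C) * u * v * w^2 + (Real.sin B) * (Real.cos C) * u * v * w^2) * hcA + ((Real.cos C) * v * w * z + (-1) * (Real.cos C) * v * w * x * y + (Real.sin C) * v * w * D) * hsB + ((Real.cos C) * v * w * D + (-1) * (Real.sin C) * v * w * z + (Real.sin C) * v * w * x * y) * hcB + ((-1) * y * z + x * z^2 + x * y^2 + (-1) * x^2 * y * z + D^2) * hsC + (D * z + D * y + (-1) * D * x * z + (-1) * D * x * y) * hcC + (D) * hD2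
  have hcos : (1 + Real.cos (A + B - C)) * (u*v*(u*w)*(v*w))
      = D^2 * ((1-x)*(1+y)*(1+z)) := by
    rw [Real.cos_sub, Real.cos_add, Real.sin_add]
    linear_combination ((Real.cos B) * (Real.sin C) * u * v * w^2 + (-1) * (Real.sin B) * (Real.cos C) * u * v * w^2) * hsA + ((Real.cos B) * (Real.cos C) * u * v * w^2 + (Real.sin B) * (Real.sin C) * u * v * w^2) * hcA + ((-1) * (Real.cos C) * v * w * D + (Real.sin C) * v * w * z + (-1) * (Real.sin C) * v * w * x * y) * hsB + ((Real.cos C) * v * w * z + (-1) * (Real.cos C) * v * w * x * y + (Real.sin C) * v * w * D) * hcB + (D * z + D * y + (-1) * D * x * z + (-1) * D * x * y) * hsC + (y * z + (-1) * x * z^2 + (-1) * x * y^2 + x^2 * y * z + (-1) * D^2) * hcC + ((-1) + x * y * z) * hD2 + (v^2 * w^2) * hu + (w^2 + (-1) * w^2 * x^2) * hv + ((1) + (-1) * y^2 + (-1) * x^2 + x^2 * y^2) * hw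
  have hM0 : 0 < u*v*(u*w)*(v*w) := by positivity
  have hP0 : 0 < D^2 * ((1-x)*(1+y)*(1+z)) := by positivity
  have h1c : 0 < 1 + Real.cos (A + B - C) := by
    rcases lt_trichotomy (0:ℝ) (1 + Real.cos (A + B - C)) with h | h | h
    · exact h
    · exfalso; rw [← h, zero_mul] at hcos; linarith
    · exfalso
      have hneg : (1 + Real.cos (A + B - C)) * (u*v*(u*w)*(v*w)) < 0 :=
        mul_neg_of_neg_of_pos h hM0
      linarith
  have hcne : Real.cos (A + B - C) ≠ -1 := by intro hc; rw [hc] at h1c; linarith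
  rw [tan_half_aux _ hcne]
  rw [div_eq_div_iff (by linarith) hD0.ne']
  have e1 : Real.sin (A + B - C) * D * (u*v*(u*w)*(v*w))
      = (1 + x - y - z) * (1 + Real.cos (A + B - C)) * (u*v*(u*w)*(v*w)) := by
    linear_combination D * hsin + (-(1 + x - y - z)) * hcos
  exact mul_right_cancel₀ (ne_of_gt hM0) e1

lemma aux_bound (p q d s : ℝ) (h : (1-p)*(1-q) = d + s^2) (hq : q ≤ 1) (hd : 0 < d) :
    p < 1 := by
  by_contra hc
  push_neg at hc
  nlinarith [mul_nonneg (by linarith : (0:ℝ) ≤ p - 1) (by linarith : (0:ℝ) ≤ 1 - q),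
    sq_nonneg s]

lemma abs_lt_one (t : ℝ) (h : t^2 < 1) : -1 < t ∧ t < 1 :=
  ⟨by nlinarith [sq_nonneg (t+1)], by nlinarith [sq_nonneg (t-1)]⟩

lemma dot3_comm (a b : Fin 3 → ℝ) : dot3 a b = dot3 b a := by
  simp only [dot3]; ring

lemma unit_of_norm (a : Fin 3 → ℝ) (h : norm3 a = 1) : dot3 a a = 1 := by
  rw [norm3] at h; exact Real.sqrt_eq_one.mp h

lemma cs3 (a b : Fin 3 → ℝ) (ha : dot3 a a = 1) (hb : dot3 b b = 1) : dot3 a b ^ 2 ≤ 1 := by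
  simp only [dot3] at *
  nlinarith [sq_nonneg (a 0*b 1 - a 1*b 0), sq_nonneg (a 0*b 2 - a 2*b 0),
    sq_nonneg (a 1*b 2 - a 2*b 1), ha, hb]

lemma gram3 (p q r : Fin 3 → ℝ) :
    det3 p q r ^ 2 = dot3 p p * dot3 q q * dot3 r r + 2*(dot3 p q * dot3 q r * dot3 p r)
      - dot3 p p * dot3 q r^2 - dot3 q q * dot3 p r^2 - dot3 r r * dot3 p q^2 := by
  simp [det3, dot3, cross3]; ring

lemma lagrange3 (a b c d : Fin 3 → ℝ) :
    dot3 (cross3 a b) (cross3 c d) = dot3 a c * dot3 b d - dot3 a d * dot3 b c := by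
  simp [dot3, cross3]; ring

lemma expand3 (p q r n : Fin 3 → ℝ) :
    det3 p q r * dot3 n (cross3 p q) = dot3 n p * dot3 (cross3 q r) (cross3 p q)
      + dot3 n q * dot3 (cross3 r p) (cross3 p q) + dot3 n r * dot3 (cross3 p q) (cross3 p q) := by
  simp [det3, dot3, cross3]; ring

lemma key3 (p q e : Fin 3 → ℝ) (a : Fin 3) :
    dot3 (cross3 p q) (cross3 p q) * e a = dot3 e (cross3 p q) * cross3 p q a
      + dot3 e q * cross3 (cross3 p q) p a - dot3 e p * cross3 (cross3 p q) q a := by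
  fin_cases a <;> simp [dot3, cross3] <;> ring

lemma sphAngle_eq (a b c : Fin 3 → ℝ) (ha : dot3 a a = 1) (hb : dot3 b b = 1)
    (hc : dot3 c c = 1) :
    sphAngle a b c = Real.arccos ((dot3 b c - dot3 a b * dot3 a c) /
      (Real.sqrt (1 - dot3 a b ^ 2) * Real.sqrt (1 - dot3 a c ^ 2))) := by
  have e1 : dot3 (b - dot3 a b • a) (c - dot3 a c • a) = dot3 b c - dot3 a b * dot3 a c := by
    simp only [dot3, Pi.sub_apply, Pi.smul_apply, smul_eq_mul] at *
    linear_combination ((a 0 * b 0 + a 1 * b 1 + a 2 * b 2) *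
      (a 0 * c 0 + a 1 * c 1 + a 2 * c 2)) * ha
  have e2 : dot3 (b - dot3 a b • a) (b - dot3 a b • a) = 1 - dot3 a b ^ 2 := by
    simp only [dot3, Pi.sub_apply, Pi.smul_apply, smul_eq_mul] at *
    linear_combination hb + (a 0 * b 0 + a 1 * b 1 + a 2 * b 2) ^ 2 * ha
  have e3 : dot3 (c - dot3 a c • a) (c - dot3 a c • a) = 1 - dot3 a c ^ 2 := by
    simp only [dot3, Pi.sub_apply, Pi.smul_apply, smul_eq_mul] at *
    linear_combination hc + (a 0 * c 0 + a 1 * c 1 + a 2 * c 2) ^ 2 * ha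
  unfold sphAngle norm3
  rw [e1, e2, e3]

/-- Lemma 2.2, first part (equation (2.1)): the dual edge joining the dual vertices of the
two adjacent spherical triangles equals the spherical edge weight times `p_i × p_j`. -/
theorem sph_dual_edge_formula
    (pi pj pk pl : Fin 3 → ℝ)
    (hpi : norm3 pi = 1) (hpj : norm3 pj = 1) (hpk : norm3 pk = 1) (hpl : norm3 pl = 1)
    (hdetk : 0 < det3 pi pj pk) (hdetl : det3 pi pj pl < 0)
    (nk nl : Fin 3 → ℝ)
    (hki : dot3 nk pi = 1) (hkj : dot3 nk pj = 1) (hkk : dot3 nk pk = 1)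
    (hli : dot3 nl pi = 1) (hlj : dot3 nl pj = 1) (hll : dot3 nl pl = 1) :
    nk - nl = sphEdgeWeight pi pj pk pl • cross3 pi pj := by
  have hi := unit_of_norm pi hpi
  have hj := unit_of_norm pj hpj
  have hk := unit_of_norm pk hpk
  have hl := unit_of_norm pl hpl
  have hdetl' : 0 < -det3 pi pj pl := by linarith
  -- Gram determinant relations
  have hDk2 : det3 pi pj pk ^ 2 = 1 - dot3 pi pj ^ 2 - dot3 pi pk ^ 2 - dot3 pj pk ^ 2
      + 2 * dot3 pi pj * dot3 pi pk * dot3 pj pk := by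
    rw [gram3 pi pj pk, hi, hj, hk]; ring
  have hDl2 : (-det3 pi pj pl) ^ 2 = 1 - dot3 pi pj ^ 2 - dot3 pi pl ^ 2 - dot3 pj pl ^ 2
      + 2 * dot3 pi pj * dot3 pi pl * dot3 pj pl := by
    rw [neg_pow, gram3 pi pj pl, hi, hj, hl]; ring
  -- strict Cauchy-Schwarz bounds
  have f1 : (1 - dot3 pi pj^2)*(1 - dot3 pi pk^2)
      = det3 pi pj pk^2 + (dot3 pj pk - dot3 pi pj * dot3 pi pk)^2 := by
    linear_combination -hDk2
  have f2 : (1 - dot3 pi pk^2)*(1 - dot3 pj pk^2)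
      = det3 pi pj pk^2 + (dot3 pi pj - dot3 pi pk * dot3 pj pk)^2 := by
    linear_combination -hDk2
  have f1l : (1 - dot3 pi pj^2)*(1 - dot3 pi pl^2)
      = (-det3 pi pj pl)^2 + (dot3 pj pl - dot3 pi pj * dot3 pi pl)^2 := by
    linear_combination -hDl2
  have f2l : (1 - dot3 pi pl^2)*(1 - dot3 pj pl^2)
      = (-det3 pi pj pl)^2 + (dot3 pi pj - dot3 pi pl * dot3 pj pl)^2 := by
    linear_combination -hDl2
  have hij2 : dot3 pi pj ^ 2 < 1 :=
    aux_bound (dot3 pi pj^2) (dot3 pi pk^2) (det3 pi pj pk^2)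
      (dot3 pj pk - dot3 pi pj * dot3 pi pk) f1 (cs3 pi pk hi hk) (pow_pos hdetk 2)
  have hik2 : dot3 pi pk ^ 2 < 1 :=
    aux_bound (dot3 pi pk^2) (dot3 pi pj^2) (det3 pi pj pk^2)
      (dot3 pj pk - dot3 pi pj * dot3 pi pk) (by linear_combination f1)
      (cs3 pi pj hi hj) (pow_pos hdetk 2)
  have hjk2 : dot3 pj pk ^ 2 < 1 :=
    aux_bound (dot3 pj pk^2) (dot3 pi pk^2) (det3 pi pj pk^2)
      (dot3 pi pj - dot3 pi pk * dot3 pj pk) (by linear_combination f2)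
      (cs3 pi pk hi hk) (pow_pos hdetk 2)
  have hil2 : dot3 pi pl ^ 2 < 1 :=
    aux_bound (dot3 pi pl^2) (dot3 pi pj^2) ((-det3 pi pj pl)^2)
      (dot3 pj pl - dot3 pi pj * dot3 pi pl) (by linear_combination f1l)
      (cs3 pi pj hi hj) (pow_pos hdetl' 2)
  have hjl2 : dot3 pj pl ^ 2 < 1 :=
    aux_bound (dot3 pj pl^2) (dot3 pi pl^2) ((-det3 pi pj pl)^2)
      (dot3 pi pj - dot3 pi pl * dot3 pj pl) (by linear_combination f2l)
      (cs3 pi pl hi hl) (pow_pos hdetl' 2)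
  have hx1 : (0:ℝ) < 1 + dot3 pi pj := by linarith [(abs_lt_one _ hij2).1]
  have hx1' : (0:ℝ) < 1 - dot3 pi pj := by linarith [(abs_lt_one _ hij2).2]
  -- rewrite the six spherical angles
  have hA1 : sphAngle pi pj pk = Real.arccos ((dot3 pj pk - dot3 pi pj * dot3 pi pk) /
      (Real.sqrt (1 - dot3 pi pj ^ 2) * Real.sqrt (1 - dot3 pi pk ^ 2))) :=
    sphAngle_eq pi pj pk hi hj hk
  have hA2 : sphAngle pj pk pi = Real.arccos ((dot3 pi pk - dot3 pi pj * dot3 pj pk) /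
      (Real.sqrt (1 - dot3 pi pj ^ 2) * Real.sqrt (1 - dot3 pj pk ^ 2))) := by
    rw [sphAngle_eq pj pk pi hj hk hi, dot3_comm pk pi, dot3_comm pj pi,
      mul_comm (Real.sqrt (1 - dot3 pj pk ^ 2)) (Real.sqrt (1 - dot3 pi pj ^ 2))]
    congr 1; ring
  have hA3 : sphAngle pk pi pj = Real.arccos ((dot3 pi pj - dot3 pi pk * dot3 pj pk) /
      (Real.sqrt (1 - dot3 pi pk ^ 2) * Real.sqrt (1 - dot3 pj pk ^ 2))) := by
    rw [sphAngle_eq pk pi pj hk hi hj, dot3_comm pk pi, dot3_comm pk pj]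
  have hB1 : sphAngle pi pl pj = Real.arccos ((dot3 pj pl - dot3 pi pj * dot3 pi pl) /
      (Real.sqrt (1 - dot3 pi pj ^ 2) * Real.sqrt (1 - dot3 pi pl ^ 2))) := by
    rw [sphAngle_eq pi pl pj hi hl hj, dot3_comm pl pj,
      mul_comm (Real.sqrt (1 - dot3 pi pl ^ 2)) (Real.sqrt (1 - dot3 pi pj ^ 2))]
    congr 1; ring
  have hB2 : sphAngle pj pi pl = Real.arccos ((dot3 pi pl - dot3 pi pj * dot3 pj pl) /
      (Real.sqrt (1 - dot3 pi pj ^ 2) * Real.sqrt (1 - dot3 pj pl ^ 2))) := by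
    rw [sphAngle_eq pj pi pl hj hi hl, dot3_comm pj pi]
  have hB3 : sphAngle pl pj pi = Real.arccos ((dot3 pi pj - dot3 pi pl * dot3 pj pl) /
      (Real.sqrt (1 - dot3 pi pl ^ 2) * Real.sqrt (1 - dot3 pj pl ^ 2))) := by
    rw [sphAngle_eq pl pj pi hl hj hi, dot3_comm pj pi, dot3_comm pl pj, dot3_comm pl pi,
      mul_comm (Real.sqrt (1 - dot3 pj pl ^ 2)) (Real.sqrt (1 - dot3 pi pl ^ 2))]
    congr 1; ring
  -- the weight
  have hcosden : Real.cos (Real.arccos (dot3 pi pj) / 2) ^ 2 = 1/2 + dot3 pi pj / 2 := by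
    have h := Real.cos_sq (Real.arccos (dot3 pi pj) / 2)
    rw [show 2 * (Real.arccos (dot3 pi pj) / 2) = Real.arccos (dot3 pi pj) by ring,
      Real.cos_arccos (by linarith [(abs_lt_one _ hij2).1]) (by linarith [(abs_lt_one _ hij2).2])] at h
    exact h
  have hsw : sphEdgeWeight pi pj pk pl =
      ((1 + dot3 pi pj - dot3 pi pk - dot3 pj pk) / det3 pi pj pk
        + (1 + dot3 pi pj - dot3 pi pl - dot3 pj pl) / (-det3 pi pj pl))
      / (1 + dot3 pi pj) := by
    unfold sphEdgeWeight
    rw [hA1, hA2, hA3, hB1, hB2, hB3, hcosden,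
      tan_lemma (dot3 pi pj) (dot3 pi pk) (dot3 pj pk) (det3 pi pj pk) hij2 hik2 hjk2
        hdetk hDk2,
      tan_lemma (dot3 pi pj) (dot3 pi pl) (dot3 pj pl) (-det3 pi pj pl) hij2 hil2 hjl2
        hdetl' hDl2]
    rw [show 2 * (1/2 + dot3 pi pj / 2) = 1 + dot3 pi pj by ring]
  -- Lagrange values
  have hv1 : dot3 (cross3 pj pk) (cross3 pi pj) = dot3 pi pj * dot3 pj pk - dot3 pi pk := by
    rw [lagrange3, dot3_comm pj pi, dot3_comm pk pj, dot3_comm pk pi, hj]; ring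
  have hv2 : dot3 (cross3 pk pi) (cross3 pi pj) = dot3 pi pj * dot3 pi pk - dot3 pj pk := by
    rw [lagrange3, dot3_comm pk pi, dot3_comm pk pj, hi]; ring
  have hv3 : dot3 (cross3 pi pj) (cross3 pi pj) = 1 - dot3 pi pj ^ 2 := by
    rw [lagrange3, hi, hj, dot3_comm pj pi]; ring
  have hv1l : dot3 (cross3 pj pl) (cross3 pi pj) = dot3 pi pj * dot3 pj pl - dot3 pi pl := by
    rw [lagrange3, dot3_comm pj pi, dot3_comm pl pj, dot3_comm pl pi, hj]; ring
  have hv2l : dot3 (cross3 pl pi) (cross3 pi pj) = dot3 pi pj * dot3 pi pl - dot3 pj pl := by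
    rw [lagrange3, dot3_comm pl pi, dot3_comm pl pj, hi]; ring
  -- dual vertex components along the cross product
  have hnkw : det3 pi pj pk * dot3 nk (cross3 pi pj)
      = (1 - dot3 pi pj) * (1 + dot3 pi pj - dot3 pi pk - dot3 pj pk) := by
    rw [expand3 pi pj pk nk, hki, hkj, hkk, hv1, hv2, hv3]; ring
  have hnlw : det3 pi pj pl * dot3 nl (cross3 pi pj)
      = (1 - dot3 pi pj) * (1 + dot3 pi pj - dot3 pi pl - dot3 pj pl) := by
    rw [expand3 pi pj pl nl, hli, hlj, hll, hv1l, hv2l, hv3]; ring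
  have hnkw' : dot3 nk (cross3 pi pj)
      = (1 - dot3 pi pj) * (1 + dot3 pi pj - dot3 pi pk - dot3 pj pk) / det3 pi pj pk := by
    rw [eq_div_iff hdetk.ne']; linear_combination hnkw
  have hnlw' : dot3 nl (cross3 pi pj)
      = (1 - dot3 pi pj) * (1 + dot3 pi pj - dot3 pi pl - dot3 pj pl) / det3 pi pj pl := by
    rw [eq_div_iff (ne_of_lt hdetl)]; linear_combination hnlw
  -- orthogonality of the dual edge
  have hepi : dot3 (nk - nl) pi = 0 := by
    have h : dot3 (nk - nl) pi = dot3 nk pi - dot3 nl pi := by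
      simp only [dot3, Pi.sub_apply]; ring
    rw [h, hki, hli, sub_self]
  have hepj : dot3 (nk - nl) pj = 0 := by
    have h : dot3 (nk - nl) pj = dot3 nk pj - dot3 nl pj := by
      simp only [dot3, Pi.sub_apply]; ring
    rw [h, hkj, hlj, sub_self]
  have hew : dot3 (nk - nl) (cross3 pi pj)
      = dot3 nk (cross3 pi pj) - dot3 nl (cross3 pi pj) := by
    simp only [dot3, Pi.sub_apply]; ring
  have hne : (1 - dot3 pi pj ^ 2) ≠ 0 := by linarith [hij2]
  funext a
  have hkeyA := key3 pi pj (nk - nl) a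
  rw [hepi, hepj] at hkeyA
  rw [hv3, hew, hnkw', hnlw'] at hkeyA
  simp only [Pi.sub_apply] at hkeyA
  simp only [Pi.sub_apply, Pi.smul_apply, smul_eq_mul]
  rw [hsw]
  apply mul_left_cancel₀ hne
  rw [hkeyA]
  field_simp [hdetk.ne', hdetl.ne, hx1.ne']
  ring
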